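/- Fix reals a < b and let I^R(θ) = Φ(b−θ) − Φ(a−θ) + (a−θ)·φ(a−θ) − (b−θ)·φ(b−θ) + φ(a−θ)²/Φ(a−θ) + φ(b−θ)²/(1 − Φ(b−θ)) denote the Fisher information of the rectified Gaussian N^R(θ, 1, [a,b]) in its location parameter θ. Then I^R(θ) → 0 as θ → +∞. (In contrast, the Fisher information of the Gaussian N(θ,1) is the constant 1; thus the FIL of the rectified Gaussian mechanism is asymptotically 0 at the tail.) -/

import Mathlib

/-!
As `θ → ∞` both endpoints `a - θ` and `b - θ` tend to `-∞`, and each of the six terms is a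
Gaussian tail quantity vanishing there: `Φ` is the CDF of `N(0,1)`, and `φ`, `x φ(x)` decay like
`exp (-x²/2)`. The only delicate term is `φ(x)²/Φ(x)`, whose denominator also vanishes. Since `φ`
increases on `(-∞, 0]`, `Φ(x) ≥ φ(x - 1)` there, and `φ(x)²/φ(x - 1) = e φ(x + 1) → 0`.
-/

open MeasureTheory Real Filter

/-- Standard Gaussian density. -/
noncomputable def phi (x : ℝ) : ℝ := (Real.sqrt (2 * Real.pi))⁻¹ * Real.exp (-(x ^ 2) / 2)

/-- Standard Gaussian cumulative distribution function. -/
noncomputable def Phi (x : ℝ) : ℝ := ∫ t in Set.Iic x, phi t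

open ProbabilityTheory

lemma phi_eq_gaussianPDFReal : phi = gaussianPDFReal 0 1 := by
  ext x
  simp [phi, gaussianPDFReal]

lemma Phi_eq_cdf_gaussianReal : Phi = cdf (gaussianReal 0 1) := by
  ext x
  rw [cdf_eq_real, measureReal_def, gaussianReal_apply_eq_integral _ one_ne_zero,
    ENNReal.toReal_ofReal (setIntegral_nonneg measurableSet_Iic
      fun t _ => gaussianPDFReal_nonneg _ _ t), Phi, phi_eq_gaussianPDFReal]

lemma phi_pos (x : ℝ) : 0 < phi x :=
  phi_eq_gaussianPDFReal ▸ gaussianPDFReal_pos _ _ x one_ne_zero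

lemma integrable_phi : Integrable phi :=
  phi_eq_gaussianPDFReal ▸ integrable_gaussianPDFReal 0 1

lemma Phi_nonneg (x : ℝ) : 0 ≤ Phi x :=
  Phi_eq_cdf_gaussianReal ▸ cdf_nonneg _ x

lemma tendsto_Phi_atBot : Tendsto Phi atBot (nhds 0) :=
  Phi_eq_cdf_gaussianReal ▸ tendsto_cdf_atBot _

lemma tendsto_rpow_abs_mul_phi_cocompact (s : ℝ) :
    Tendsto (fun x => |x| ^ s * phi x) (cocompact ℝ) (nhds 0) := by
  have h := (tendsto_rpow_abs_mul_exp_neg_mul_sq_cocompact (a := 1 / 2) (by norm_num) s).const_mul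
    (Real.sqrt (2 * Real.pi))⁻¹
  rw [mul_zero] at h
  refine h.congr fun x => ?_
  simp only [phi]
  ring_nf

lemma tendsto_phi_atBot : Tendsto phi atBot (nhds 0) := by
  simpa using (tendsto_rpow_abs_mul_phi_cocompact 0).mono_left atBot_le_cocompact

lemma tendsto_mul_phi_atBot : Tendsto (fun x => x * phi x) atBot (nhds 0) := by
  rw [tendsto_zero_iff_abs_tendsto_zero]
  simpa [Function.comp_def, abs_mul, abs_of_pos (phi_pos _)] using
    (tendsto_rpow_abs_mul_phi_cocompact 1).mono_left atBot_le_cocompact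

lemma monotoneOn_phi : MonotoneOn phi (Set.Iic 0) := by
  intro x hx y hy hxy
  simp only [Set.mem_Iic] at hx hy
  unfold phi
  gcongr ?_ * exp ?_
  nlinarith

lemma phi_sub_one_le_Phi {x : ℝ} (hx : x ≤ 0) : phi (x - 1) ≤ Phi x :=
  calc phi (x - 1) = ∫ _ in Set.Ioc (x - 1) x, phi (x - 1) := by simp
    _ ≤ ∫ t in Set.Ioc (x - 1) x, phi t :=
      setIntegral_mono_on (integrableOn_const (by simp)) integrable_phi.integrableOn
        measurableSet_Ioc fun t ht =>
          monotoneOn_phi (by simp; linarith) (by simp; linarith [ht.2]) ht.1.le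
    _ ≤ Phi x :=
      setIntegral_mono_set integrable_phi.integrableOn (.of_forall fun t => (phi_pos t).le)
        Set.Ioc_subset_Iic_self.eventuallyLE

lemma phi_sq_div_phi_sub_one (x : ℝ) : phi x ^ 2 / phi (x - 1) = exp 1 * phi (x + 1) := by
  rw [div_eq_iff (phi_pos _).ne']
  have h : exp (-(x ^ 2) / 2) ^ 2 =
      exp 1 * exp (-((x + 1) ^ 2) / 2) * exp (-((x - 1) ^ 2) / 2) := by
    rw [← exp_add, ← exp_add, sq, ← exp_add]
    ring_nf
  simp only [phi]
  linear_combination (Real.sqrt (2 * Real.pi))⁻¹ ^ 2 * h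

lemma tendsto_phi_sq_div_Phi_atBot : Tendsto (fun x => phi x ^ 2 / Phi x) atBot (nhds 0) := by
  have h : Tendsto (fun x => exp 1 * phi (x + 1)) atBot (nhds 0) := by
    simpa using (tendsto_phi_atBot.comp (tendsto_atBot_add_const_right _ 1 tendsto_id)).const_mul
      (exp 1)
  refine tendsto_of_tendsto_of_tendsto_of_le_of_le' tendsto_const_nhds h
    (.of_forall fun x => div_nonneg (sq_nonneg _) (Phi_nonneg x)) ?_
  filter_upwards [eventually_le_atBot 0] with x hx
  rw [← phi_sq_div_phi_sub_one]
  exact div_le_div_of_nonneg_left (sq_nonneg _) (phi_pos _) (phi_sub_one_le_Phi hx)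

lemma tendsto_phi_sq_div_one_sub_Phi_atBot :
    Tendsto (fun x => phi x ^ 2 / (1 - Phi x)) atBot (nhds 0) := by
  simpa [Pi.div_def] using
    (tendsto_phi_atBot.pow 2).div (tendsto_Phi_atBot.const_sub 1) (by norm_num)

lemma tendsto_const_sub_atTop_atBot (a : ℝ) : Tendsto (fun θ => a - θ) atTop atBot := by
  simpa [sub_eq_add_neg] using tendsto_atBot_add_const_left atTop a tendsto_neg_atTop_atBot

theorem rectified_gaussian_fisher_info_tendsto_zero_general (a b : ℝ) :
    Tendsto (fun θ : ℝ =>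
        Phi (b - θ) - Phi (a - θ) + (a - θ) * phi (a - θ) - (b - θ) * phi (b - θ) +
          phi (a - θ) ^ 2 / Phi (a - θ) + phi (b - θ) ^ 2 / (1 - Phi (b - θ)))
      atTop (nhds 0) := by
  have ha := tendsto_const_sub_atTop_atBot a
  have hb := tendsto_const_sub_atTop_atBot b
  simpa using (((((tendsto_Phi_atBot.comp hb).sub (tendsto_Phi_atBot.comp ha)).add
    (tendsto_mul_phi_atBot.comp ha)).sub (tendsto_mul_phi_atBot.comp hb)).add
    (tendsto_phi_sq_div_Phi_atBot.comp ha)).add (tendsto_phi_sq_div_one_sub_Phi_atBot.comp hb)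

/-- The Fisher information of the rectified Gaussian `N^R(θ, 1, [a,b])` in its
location parameter tends to `0` as `θ → +∞`. -/
theorem rectified_gaussian_fisher_info_tendsto_zero (a b : ℝ) (hab : a < b) :
    Tendsto (fun θ : ℝ =>
        Phi (b - θ) - Phi (a - θ) + (a - θ) * phi (a - θ) - (b - θ) * phi (b - θ) +
          phi (a - θ) ^ 2 / Phi (a - θ) + phi (b - θ) ^ 2 / (1 - Phi (b - θ)))
      atTop (nhds 0) :=
  rectified_gaussian_fisher_info_tendsto_zero_general a b
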